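/- Let a(x,t) = Σ_{k∈ℤ} â_k(x) e^{ikt} with each â_k Riemann integrable on [0,1] and ⦀a⦀ = Σ_k ‖â_k‖_∞ < ∞, and suppose every T_n(a) is normal. Then for all nonnegative integers p, q, Tr[T_n(a)^p (T_n(a)^*)^q] = ((n+1)/(2π)) ∫_0^1 ∫_0^{2π} a(x,t)^p · conj(a(x,t))^q dt dx + o(n) as n → ∞. -/

import Mathlib

open Filter Matrix

/-- The Kac–Murdock–Szegő matrix `[â_{j-i}((i+j)/(2n+2))]_{i,j=0}^n`. -/
noncomputable def kms (a : ℤ → ℝ → ℂ) (n : ℕ) : Matrix (Fin (n+1)) (Fin (n+1)) ℂ :=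
  fun i j => a ((j : ℤ) - (i : ℤ)) (((i : ℝ) + (j : ℝ)) / (2 * (n : ℝ) + 2))

noncomputable def supNorm (f : ℝ → ℂ) : ℝ := ⨆ x : Set.Icc (0:ℝ) 1, ‖f x‖

noncomputable def symbolFun (a : ℤ → ℝ → ℂ) (x t : ℝ) : ℂ :=
  ∑' k : ℤ, a k x * Complex.exp ((k : ℂ) * t * Complex.I)

/-- Riemann integrability on `[0,1]` (Lebesgue's criterion: bounded and a.e. continuous). -/
def RiemannIntegrableOn01 (f : ℝ → ℂ) : Prop :=
  (∃ M, ∀ x ∈ Set.Icc (0:ℝ) 1, ‖f x‖ ≤ M) ∧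
  ∀ᵐ x ∂(MeasureTheory.volume.restrict (Set.Icc (0:ℝ) 1)),
    ContinuousWithinAt f (Set.Icc (0:ℝ) 1) x

/-!
Put `L = [a, …, a, ā, …, ā]` (`p` resp. `q` copies), where `ā` has coefficients
`conj â_{-k}`, so that `T_n(ā) = T_n(a)ᴴ` and the symbol of `ā` is `conj a`; the claim becomes
`Tr ∏_{c ∈ L} T_n(c) / (n+1) → (1/2π) ∫∫ ∏_{c ∈ L} c(x,t)`.

Truncating every symbol to `|k| ≤ K` moves both sides by at most `∏ ⦀c⦀ - ∏ ⦀c_K⦀`, uniformly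
in `n`: on the left because `‖T_n(c)‖ ≤ ⦀c⦀` in the `ℓ^∞` operator norm, on the right because
`|c(x,t)| ≤ ⦀c⦀`. For banded matrices, the diagonal entry at `i` is, except for `2K|L|` indices
near the ends, a finite sum over closed paths `i → i + δ₁ → ⋯ → i` of products of coefficients
sampled at points `i/(n+1) + O(1/n)`. The normalized trace is therefore the integral of a step
function which, by the a.e. continuity of the coefficients, converges a.e. to the same path sum
with all points equal to `x`, and that path sum is `(1/2π) ∫ ∏ c_K(x,t) dt` by orthogonality of
the `e^{ikt}`. Dominated convergence concludes.
-/

open Set MeasureTheory Topology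

namespace KMS

section General

lemma forall_mem_replicate_append {α : Type*} {P : α → Prop} {a b : α} (ha : P a) (hb : P b)
    (p q : ℕ) : ∀ c ∈ List.replicate p a ++ List.replicate q b, P c := by
  simp only [List.mem_append, List.mem_replicate]
  rintro c (⟨-, rfl⟩ | ⟨-, rfl⟩) <;> assumption

variable {ι R : Type*} [SeminormedRing R] [NormOneClass R]

lemma norm_list_prod_le_of_le (L : List ι) {f : ι → R} {u : ι → ℝ}
    (hf : ∀ i ∈ L, ‖f i‖ ≤ u i) : ‖(L.map f).prod‖ ≤ (L.map u).prod := by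
  induction L with
  | nil => simp
  | cons i L ih =>
    simp only [List.forall_mem_cons] at hf
    simp only [List.map_cons, List.prod_cons]
    exact (norm_mul_le _ _).trans
      (mul_le_mul hf.1 (ih hf.2) (norm_nonneg _) ((norm_nonneg _).trans hf.1))

lemma norm_list_prod_sub_le (L : List ι) {f g : ι → R} {u v : ι → ℝ}
    (hf : ∀ i ∈ L, ‖f i‖ ≤ u i) (hg : ∀ i ∈ L, ‖g i‖ ≤ v i)
    (hfg : ∀ i ∈ L, ‖f i - g i‖ ≤ u i - v i) :
    ‖(L.map f).prod - (L.map g).prod‖ ≤ (L.map u).prod - (L.map v).prod := by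
  induction L with
  | nil => simp
  | cons i L ih =>
    simp only [List.forall_mem_cons] at hf hg hfg
    simp only [List.map_cons, List.prod_cons]
    have hF := ih hf.2 hg.2 hfg.2
    have hG := norm_list_prod_le_of_le L hg.2
    have hui : 0 ≤ u i := (norm_nonneg _).trans hf.1
    calc ‖f i * (L.map f).prod - g i * (L.map g).prod‖
        = ‖f i * ((L.map f).prod - (L.map g).prod) + (f i - g i) * (L.map g).prod‖ := by
          rw [mul_sub, sub_mul]; abel_nf
      _ ≤ u i * ((L.map u).prod - (L.map v).prod) + (u i - v i) * (L.map v).prod := by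
          refine (norm_add_le _ _).trans (add_le_add ?_ ?_) <;> refine (norm_mul_le _ _).trans ?_
          · exact mul_le_mul hf.1 hF (norm_nonneg _) hui
          · exact mul_le_mul hfg.1 hG (norm_nonneg _) ((norm_nonneg _).trans hfg.1)
      _ = u i * (L.map u).prod - v i * (L.map v).prod := by ring

lemma tendsto_of_uniform_approx {α : Type*} [PseudoMetricSpace α] {f : ℕ → α}
    {F : ℕ → ℕ → α} {g : ℕ → α} {y : α} {ε : ℕ → ℝ} (hF : ∀ K, Tendsto (F K) atTop (𝓝 (g K)))
    (hfF : ∀ K n, dist (f n) (F K n) ≤ ε K) (hgy : ∀ K, dist (g K) y ≤ ε K)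
    (hε : Tendsto ε atTop (𝓝 0)) : Tendsto f atTop (𝓝 y) := by
  refine Metric.tendsto_atTop.2 fun r hr => ?_
  obtain ⟨K, hK⟩ := (hε.eventually (gt_mem_nhds (by positivity : 0 < r / 3))).exists
  obtain ⟨N, hN⟩ := Metric.tendsto_atTop.1 (hF K) (r / 3) (by positivity)
  refine ⟨N, fun n hn => ?_⟩
  linarith [dist_triangle4 (f n) (F K n) (g K) y, hfF K n, hN n hn, hgy K]

lemma sum_fin_sub_le_tsum {g : ℤ → ℝ} (hg : Summable g) (hg0 : ∀ k, 0 ≤ g k) {N : ℕ}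
    (i : Fin N) : ∑ j : Fin N, g (j - i) ≤ ∑' k, g k := by
  rw [← tsum_fintype (L := SummationFilter.unconditional _)]
  refine tsum_comp_le_tsum_of_inj hg hg0 (i := fun j : Fin N => (j : ℤ) - i) fun j j' h => ?_
  simp only [sub_left_inj, Nat.cast_inj] at h
  exact Fin.ext h

lemma sum_fin_ite_abs_sub_le {M : Type*} [AddCommMonoid M] {n K : ℕ} (j : Fin (n+1))
    (hlo : K ≤ (j : ℕ)) (hhi : (j : ℕ) + K ≤ n) (g : ℤ → M) :
    ∑ k : Fin (n+1), (if |(k : ℤ) - j| ≤ K then g ((k : ℤ) - j) else 0) =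
      ∑ δ ∈ Finset.Icc (-(K:ℤ)) K, g δ := by
  rw [← Finset.sum_filter]
  refine Finset.sum_bij' (fun k _ => (k : ℤ) - j)
    (fun δ hδ => ⟨(j + δ).toNat, by rw [Finset.mem_Icc] at hδ; omega⟩) ?_ ?_ ?_ ?_
    fun _ _ => rfl
  all_goals
    intro _ h
    simp only [Finset.mem_filter, Finset.mem_univ, true_and, Finset.mem_Icc, abs_le,
      Fin.ext_iff] at h ⊢
    omega

lemma norm_sum_le_of_eq_zero_off_ends {E : Type*} [SeminormedAddCommGroup E] {n m : ℕ}
    {f : Fin (n+1) → E} {B : ℝ} (hB : ∀ i, ‖f i‖ ≤ B)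
    (hf : ∀ i : Fin (n+1), m ≤ (i : ℕ) → (i : ℕ) + m ≤ n → f i = 0) :
    ‖∑ i, f i‖ ≤ 2 * m * B := by
  have hB0 : 0 ≤ B := (norm_nonneg _).trans (hB 0)
  set e : Fin (n+1) → ℝ := fun i => if (i : ℕ) < m then B else 0
  have he : ∑ i, e i ≤ m * B := by
    simp only [e, Finset.sum_ite, Finset.sum_const_zero, add_zero, Finset.sum_const,
      nsmul_eq_mul, Fin.card_filter_val_lt]
    exact mul_le_mul_of_nonneg_right (by exact_mod_cast min_le_right _ _) hB0
  have hpt : ∀ i, ‖f i‖ ≤ e i + e (Fin.revPerm i) := by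
    intro i
    simp only [e, Fin.revPerm_apply, Fin.val_rev]
    split_ifs <;> first | linarith [hB i] | simp [hf i (by omega) (by omega)]
  calc ‖∑ i, f i‖ ≤ ∑ i, (e i + e (Fin.revPerm i)) :=
        (norm_sum_le _ _).trans (Finset.sum_le_sum fun i _ => hpt i)
    _ = 2 * ∑ i, e i := by rw [Finset.sum_add_distrib, Equiv.sum_comp]; ring
    _ ≤ 2 * m * B := by linarith

lemma eqOn_comp_natFloor (g : ℕ → ℂ) (i : ℕ) :
    EqOn (fun y : ℝ => g ⌊y⌋₊) (fun _ => g i) (Ioo (i : ℝ) (i + 1)) :=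
  fun y hy => congrArg g (Nat.floor_eq_on_Ico i y ⟨hy.1.le, hy.2⟩)

lemma integral_comp_natFloor_mul (g : ℕ → ℂ) (n : ℕ) :
    ∫ x in (0:ℝ)..1, g ⌊(n + 1 : ℝ) * x⌋₊ =
      (n + 1 : ℂ)⁻¹ * ∑ i ∈ Finset.range (n + 1), g i := by
  have hpiece : ∀ i : ℕ, IntervalIntegrable (fun y : ℝ => g ⌊y⌋₊) volume i (i + 1 : ℕ) := by
    intro i
    refine (intervalIntegrable_const (c := g i)).congr_uIoo ?_
    rw [uIoo_of_le (by push_cast; linarith), Nat.cast_succ]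
    exact (eqOn_comp_natFloor g i).symm
  rw [intervalIntegral.integral_comp_mul_left (fun y => g ⌊y⌋₊) (by positivity), mul_zero,
    mul_one, show (n + 1 : ℝ) = ((n + 1 : ℕ) : ℝ) by push_cast; ring,
    ← Nat.cast_zero (R := ℝ),
    ← intervalIntegral.sum_integral_adjacent_intervals fun i _ => hpiece i,
    Finset.mul_sum, Finset.smul_sum]
  refine Finset.sum_congr rfl fun i _ => ?_
  push_cast
  rw [intervalIntegral.integral_congr_Ioo_of_le (by linarith) (eqOn_comp_natFloor g i)]
  simp [Complex.real_smul]

lemma norm_exp_int_mul_I (k : ℤ) (t : ℝ) : ‖Complex.exp (k * t * Complex.I)‖ = 1 := by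
  rw [show (k * t * Complex.I : ℂ) = ((k * t : ℝ) : ℂ) * Complex.I by push_cast; ring]
  exact Complex.norm_exp_ofReal_mul_I _

lemma continuous_exp_int_mul_I (k : ℤ) :
    Continuous fun t : ℝ => Complex.exp (k * t * Complex.I) := by
  fun_prop

lemma integral_exp_int_mul_I (s : ℤ) :
    ∫ t in (0:ℝ)..(2 * Real.pi), Complex.exp (s * t * Complex.I) =
      if s = 0 then 2 * Real.pi else 0 := by
  split_ifs with hs
  · simp [hs]
  have hsI : (s * Complex.I : ℂ) ≠ 0 := mul_ne_zero (Int.cast_ne_zero.2 hs) Complex.I_ne_zero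
  simp_rw [mul_right_comm _ _ Complex.I]
  rw [integral_exp_mul_complex hsI,
    show (s * Complex.I * ((2 * Real.pi : ℝ) : ℂ)) = s * (2 * Real.pi * Complex.I) by
      push_cast; ring,
    Complex.exp_int_mul_two_pi_mul_I]
  simp

attribute [local instance] Matrix.linftyOpSeminormedAddCommGroup

lemma norm_apply_le_linfty_opNorm {m n α : Type*} [Fintype m] [Fintype n]
    [SeminormedAddCommGroup α] (A : Matrix m n α) (i : m) (j : n) : ‖A i j‖ ≤ ‖A‖ :=
  (PiLp.norm_apply_le _ j).trans (norm_le_pi_norm (fun i => WithLp.toLp 1 (A i)) i)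

lemma linfty_opNorm_le_of_forall_sum_le {m n α : Type*} [Fintype m] [Fintype n]
    [SeminormedAddCommGroup α] (A : Matrix m n α) {C : ℝ} (hC : 0 ≤ C)
    (h : ∀ i, ∑ j, ‖A i j‖ ≤ C) : ‖A‖ ≤ C :=
  (pi_norm_le_iff_of_nonneg (x := fun i => WithLp.toLp 1 (A i)) hC).2 fun i => by
    rw [PiLp.norm_eq_of_L1]; exact h i

lemma norm_trace_le {n α : Type*} [Fintype n] [SeminormedAddCommGroup α] (A : Matrix n n α) :
    ‖A.trace‖ ≤ Fintype.card n * ‖A‖ := by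
  calc ‖A.trace‖ ≤ ∑ i, ‖A i i‖ := norm_sum_le _ _
    _ ≤ ∑ _i, ‖A‖ := Finset.sum_le_sum fun i _ => norm_apply_le_linfty_opNorm A i i
    _ = Fintype.card n * ‖A‖ := by simp

end General

variable {c d : ℤ → ℝ → ℂ} {L : List (ℤ → ℝ → ℂ)} {x : ℝ}

/-! ### The norm `⦀c⦀` and truncation -/

lemma supNorm_nonneg (f : ℝ → ℂ) : 0 ≤ supNorm f :=
  Real.iSup_nonneg fun _ => norm_nonneg _

lemma norm_le_supNorm {f : ℝ → ℂ} (hf : BddAbove (range fun x : Icc (0:ℝ) 1 => ‖f x‖))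
    {x : ℝ} (hx : x ∈ Icc (0:ℝ) 1) : ‖f x‖ ≤ supNorm f :=
  le_ciSup hf ⟨x, hx⟩

@[simp] lemma supNorm_zero : supNorm 0 = 0 := by
  simp [supNorm]

/-- `⦀c⦀ < ∞`; `bddAbove` is needed since `supNorm` of an unbounded function is the junk `0`. -/
structure WienerBounded (c : ℤ → ℝ → ℂ) : Prop where
  bddAbove : ∀ k, BddAbove (range fun x : Icc (0:ℝ) 1 => ‖c k x‖)
  summable : Summable fun k => supNorm (c k)

def AEContinuousCoeffs (c : ℤ → ℝ → ℂ) : Prop :=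
  ∀ k, ∀ᵐ x ∂(volume.restrict (Icc (0:ℝ) 1)), ContinuousWithinAt (c k) (Icc (0:ℝ) 1) x

/-- The paper's `⦀c⦀`. -/
noncomputable def wienerNorm (c : ℤ → ℝ → ℂ) : ℝ := ∑' k, supNorm (c k)

def truncate (K : ℕ) (c : ℤ → ℝ → ℂ) : ℤ → ℝ → ℂ :=
  fun k x => if |k| ≤ K then c k x else 0

lemma wienerNorm_nonneg (c : ℤ → ℝ → ℂ) : 0 ≤ wienerNorm c :=
  tsum_nonneg fun _ => supNorm_nonneg _

lemma WienerBounded.mono (hc : WienerBounded c) (h : ∀ k x, ‖d k x‖ ≤ ‖c k x‖) :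
    WienerBounded d where
  bddAbove k := ⟨supNorm (c k), by
    rintro _ ⟨x, rfl⟩
    exact (h k x).trans (le_ciSup (hc.bddAbove k) x)⟩
  summable := hc.summable.of_nonneg_of_le (fun _ => supNorm_nonneg _)
    fun k => ciSup_mono (hc.bddAbove k) fun x => h k x

lemma norm_truncate_le (K : ℕ) (c : ℤ → ℝ → ℂ) (k : ℤ) (x : ℝ) :
    ‖truncate K c k x‖ ≤ ‖c k x‖ := by
  unfold truncate; split_ifs <;> simp

lemma norm_sub_truncate_le (K : ℕ) (c : ℤ → ℝ → ℂ) (k : ℤ) (x : ℝ) :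
    ‖(c - truncate K c) k x‖ ≤ ‖c k x‖ := by
  simp only [Pi.sub_apply, truncate]; split_ifs <;> simp

lemma WienerBounded.truncate (hc : WienerBounded c) (K : ℕ) : WienerBounded (truncate K c) :=
  hc.mono (norm_truncate_le K c)

lemma wienerBounded_sub_truncate (hc : WienerBounded c) (K : ℕ) :
    WienerBounded (c - truncate K c) :=
  hc.mono (norm_sub_truncate_le K c)

lemma supNorm_truncate (K : ℕ) (c : ℤ → ℝ → ℂ) (k : ℤ) :
    supNorm (truncate K c k) = if |k| ≤ K then supNorm (c k) else 0 := by
  unfold truncate; split_ifs <;> simp [← Pi.zero_def]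

lemma wienerNorm_truncate_add (hc : WienerBounded c) (K : ℕ) :
    wienerNorm (truncate K c) + wienerNorm (c - truncate K c) = wienerNorm c := by
  have hsplit : ∀ k,
      supNorm (truncate K c k) + supNorm ((c - truncate K c) k) = supNorm (c k) := by
    intro k
    by_cases hk : |k| ≤ K
    · have : (c - truncate K c) k = 0 := funext fun x => by simp [truncate, hk]
      rw [this, supNorm_zero, add_zero, supNorm_truncate, if_pos hk]
    · have : (c - truncate K c) k = c k := funext fun x => by simp [truncate, hk]
      rw [this, supNorm_truncate, if_neg hk, zero_add]
  rw [wienerNorm, wienerNorm,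
    ← (hc.truncate K).summable.tsum_add (wienerBounded_sub_truncate hc K).summable]
  exact tsum_congr hsplit

lemma wienerNorm_truncate_le (hc : WienerBounded c) (K : ℕ) :
    wienerNorm (truncate K c) ≤ wienerNorm c := by
  linarith [wienerNorm_truncate_add hc K, wienerNorm_nonneg (c - truncate K c)]

lemma tendsto_wienerNorm_truncate (hc : WienerBounded c) :
    Tendsto (fun K : ℕ => wienerNorm (truncate K c)) atTop (𝓝 (wienerNorm c)) := by
  simp_rw [wienerNorm, supNorm_truncate]
  refine tendsto_tsum_of_dominated_convergence hc.summable (fun k => ?_)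
    (Eventually.of_forall fun K k => ?_)
  · refine tendsto_const_nhds.congr' ?_
    filter_upwards [eventually_ge_atTop k.natAbs] with K hK
    rw [if_pos (by rw [Int.abs_eq_natAbs]; exact_mod_cast hK)]
  · split_ifs <;> simp [abs_of_nonneg (supNorm_nonneg _), supNorm_nonneg]

noncomputable def truncationError (K : ℕ) (L : List (ℤ → ℝ → ℂ)) : ℝ :=
  (L.map wienerNorm).prod - (L.map fun c => wienerNorm (truncate K c)).prod

lemma tendsto_truncationError (hL : ∀ c ∈ L, WienerBounded c) :
    Tendsto (fun K => truncationError K L) atTop (𝓝 0) := by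
  have h := (tendsto_list_prod L fun c hc => tendsto_wienerNorm_truncate (hL c hc)).const_sub
    (L.map wienerNorm).prod
  rwa [sub_self] at h

/-! ### Symbols -/

lemma norm_symbolFun_term_le (hc : WienerBounded c) (hx : x ∈ Icc (0:ℝ) 1) (t : ℝ) (k : ℤ) :
    ‖c k x * Complex.exp (k * t * Complex.I)‖ ≤ supNorm (c k) := by
  rw [norm_mul, norm_exp_int_mul_I, mul_one]
  exact norm_le_supNorm (hc.bddAbove k) hx

lemma summable_symbolFun_term (hc : WienerBounded c) (hx : x ∈ Icc (0:ℝ) 1) (t : ℝ) :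
    Summable fun k : ℤ => c k x * Complex.exp (k * t * Complex.I) :=
  .of_norm_bounded hc.summable (norm_symbolFun_term_le hc hx t)

lemma norm_symbolFun_le (hc : WienerBounded c) (hx : x ∈ Icc (0:ℝ) 1) (t : ℝ) :
    ‖symbolFun c x t‖ ≤ wienerNorm c :=
  tsum_of_norm_bounded hc.summable.hasSum (norm_symbolFun_term_le hc hx t)

lemma continuous_symbolFun (hc : WienerBounded c) (hx : x ∈ Icc (0:ℝ) 1) :
    Continuous (symbolFun c x) :=
  continuous_tsum (fun k => continuous_const.mul (continuous_exp_int_mul_I k)) hc.summable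
    fun k t => norm_symbolFun_term_le hc hx t k

lemma symbolFun_sub (hc : WienerBounded c) (hd : WienerBounded d) (hx : x ∈ Icc (0:ℝ) 1)
    (t : ℝ) : symbolFun (c - d) x t = symbolFun c x t - symbolFun d x t := by
  simp only [symbolFun, Pi.sub_apply, sub_mul]
  exact (summable_symbolFun_term hc hx t).tsum_sub (summable_symbolFun_term hd hx t)

lemma symbolFun_truncate (K : ℕ) (c : ℤ → ℝ → ℂ) (x t : ℝ) :
    symbolFun (truncate K c) x t =
      ∑ k ∈ Finset.Icc (-(K:ℤ)) K, c k x * Complex.exp (k * t * Complex.I) := by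
  rw [symbolFun, tsum_eq_sum (s := Finset.Icc (-(K:ℤ)) K) fun k hk => by
    rw [Finset.mem_Icc, ← abs_le] at hk; simp [truncate, hk]]
  refine Finset.sum_congr rfl fun k hk => ?_
  rw [Finset.mem_Icc, ← abs_le] at hk
  simp [truncate, hk]

lemma continuous_symbolFun_truncate (K : ℕ) (c : ℤ → ℝ → ℂ) (x : ℝ) :
    Continuous (symbolFun (truncate K c) x) := by
  simp_rw [funext (symbolFun_truncate K c x)]
  exact continuous_finsetSum _ fun k _ => continuous_const.mul (continuous_exp_int_mul_I k)

lemma norm_prod_symbolFun_sub_prod_symbolFun_truncate_le (hL : ∀ c ∈ L, WienerBounded c)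
    (K : ℕ) (hx : x ∈ Icc (0:ℝ) 1) (t : ℝ) :
    ‖(L.map (symbolFun · x t)).prod - (L.map fun c => symbolFun (truncate K c) x t).prod‖ ≤
      truncationError K L := by
  refine norm_list_prod_sub_le L (fun c hc => norm_symbolFun_le (hL c hc) hx t)
    (fun c hc => norm_symbolFun_le ((hL c hc).truncate K) hx t) fun c hc => ?_
  rw [← wienerNorm_truncate_add (hL c hc) K, add_sub_cancel_left,
    ← symbolFun_sub (hL c hc) ((hL c hc).truncate K) hx]
  exact norm_symbolFun_le (wienerBounded_sub_truncate (hL c hc) K) hx t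

/-! ### Band path sums -/

/-- The sum, over paths `s = s₀, s₁ = s₀ + δ₁, …, sₘ = 0` with steps `|δₗ| ≤ K` (`m` the length
of `L`), of `∏ₗ cₗ δₗ (y sₗ₋₁ δₗ)`. -/
noncomputable def bandPathSum (K : ℕ) : List (ℤ → ℝ → ℂ) → (ℤ → ℤ → ℝ) → ℤ → ℂ
  | [], _, s => if s = 0 then 1 else 0
  | c :: L, y, s => ∑ δ ∈ Finset.Icc (-(K:ℤ)) K, c δ (y s δ) * bandPathSum K L y (s + δ)

lemma norm_bandPathSum_le (hL : ∀ c ∈ L, WienerBounded c) (K : ℕ) {y : ℤ → ℤ → ℝ}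
    (hy : ∀ s δ, y s δ ∈ Icc (0:ℝ) 1) (s : ℤ) :
    ‖bandPathSum K L y s‖ ≤ (L.map wienerNorm).prod := by
  induction L generalizing s with
  | nil => unfold bandPathSum; split_ifs <;> simp
  | cons c L ih =>
    simp only [List.forall_mem_cons] at hL
    rw [bandPathSum, List.map_cons, List.prod_cons]
    calc _ ≤ ∑ δ ∈ Finset.Icc (-(K:ℤ)) K, supNorm (c δ) * (L.map wienerNorm).prod := by
          refine (norm_sum_le _ _).trans (Finset.sum_le_sum fun δ _ => ?_)
          rw [norm_mul]
          exact mul_le_mul (norm_le_supNorm (hL.1.bddAbove δ) (hy s δ)) (ih hL.2 _)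
            (norm_nonneg _) (supNorm_nonneg _)
      _ ≤ wienerNorm c * (L.map wienerNorm).prod := by
          rw [← Finset.sum_mul]
          refine mul_le_mul_of_nonneg_right ?_ ((norm_nonneg _).trans (ih hL.2 0))
          exact hL.1.summable.sum_le_tsum _ fun _ _ => supNorm_nonneg _

lemma tendsto_bandPathSum {ι : Type*} {l : Filter ι} {y : ι → ℤ → ℤ → ℝ} (K : ℕ)
    (hy : ∀ s δ, Tendsto (fun m => y m s δ) l (𝓝[Icc (0:ℝ) 1] x))
    (hL : ∀ c ∈ L, ∀ δ, ContinuousWithinAt (c δ) (Icc (0:ℝ) 1) x) (s : ℤ) :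
    Tendsto (fun m => bandPathSum K L (y m) s) l (𝓝 (bandPathSum K L (fun _ _ => x) s)) := by
  induction L generalizing s with
  | nil => exact tendsto_const_nhds
  | cons c L ih =>
    simp only [List.forall_mem_cons] at hL
    exact tendsto_finsetSum _ fun δ _ => ((hL.1 δ).tendsto.comp (hy s δ)).mul (ih hL.2 _)

lemma integral_prod_symbolFun_truncate_mul_exp (K : ℕ) (L : List (ℤ → ℝ → ℂ)) (x : ℝ)
    (s : ℤ) :
    ∫ t in (0:ℝ)..(2 * Real.pi),
        (L.map fun c => symbolFun (truncate K c) x t).prod * Complex.exp (s * t * Complex.I) =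
      2 * Real.pi * bandPathSum K L (fun _ _ => x) s := by
  induction L generalizing s with
  | nil =>
    simp only [List.map_nil, List.prod_nil, one_mul, integral_exp_int_mul_I, bandPathSum]
    split_ifs <;> simp
  | cons c L ih =>
    set P : ℝ → ℂ := fun t => (L.map fun c => symbolFun (truncate K c) x t).prod
    have hP : Continuous P := continuous_list_prod _ fun c _ => continuous_symbolFun_truncate K c x
    have hexpand : ∀ t : ℝ, ((c :: L).map fun c => symbolFun (truncate K c) x t).prod *
        Complex.exp (s * t * Complex.I) = ∑ δ ∈ Finset.Icc (-(K:ℤ)) K,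
          c δ x * (P t * Complex.exp ((s + δ : ℤ) * t * Complex.I)) := by
      intro t
      rw [List.map_cons, List.prod_cons, symbolFun_truncate, Finset.sum_mul, Finset.sum_mul]
      refine Finset.sum_congr rfl fun δ _ => ?_
      rw [show ((s + δ : ℤ) * t * Complex.I : ℂ) = δ * t * Complex.I + s * t * Complex.I by
        push_cast; ring, Complex.exp_add]
      ring
    have hint : ∀ δ : ℤ, IntervalIntegrable
        (fun t : ℝ => c δ x * (P t * Complex.exp ((s + δ : ℤ) * t * Complex.I))) volume 0
        (2 * Real.pi) := fun δ => Continuous.intervalIntegrable (by fun_prop) _ _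
    rw [intervalIntegral.integral_congr fun t _ => hexpand t,
      intervalIntegral.integral_finsetSum fun δ _ => hint δ]
    simp only [P, intervalIntegral.integral_const_mul, ih, bandPathSum, Finset.mul_sum]
    exact Finset.sum_congr rfl fun δ _ => by ring

lemma integral_prod_symbolFun_truncate (K : ℕ) (L : List (ℤ → ℝ → ℂ)) (x : ℝ) :
    ∫ t in (0:ℝ)..(2 * Real.pi), (L.map fun c => symbolFun (truncate K c) x t).prod =
      2 * Real.pi * bandPathSum K L (fun _ _ => x) 0 := by
  simpa using integral_prod_symbolFun_truncate_mul_exp K L x 0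

lemma norm_integral_prod_symbolFun_sub_bandPathSum_le (hL : ∀ c ∈ L, WienerBounded c) (K : ℕ)
    (hx : x ∈ Icc (0:ℝ) 1) :
    ‖(∫ t in (0:ℝ)..(2 * Real.pi), (L.map (symbolFun · x t)).prod) -
        2 * Real.pi * bandPathSum K L (fun _ _ => x) 0‖ ≤ 2 * Real.pi * truncationError K L := by
  have hcont : Continuous fun t => (L.map (symbolFun · x t)).prod :=
    continuous_list_prod _ fun c hc => continuous_symbolFun (hL c hc) hx
  have hcontK : Continuous fun t => (L.map fun c => symbolFun (truncate K c) x t).prod :=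
    continuous_list_prod _ fun c _ => continuous_symbolFun_truncate K c x
  rw [← integral_prod_symbolFun_truncate,
    ← intervalIntegral.integral_sub (hcont.intervalIntegrable _ _) (hcontK.intervalIntegrable _ _)]
  refine (intervalIntegral.norm_integral_le_of_norm_le_const fun t _ =>
    norm_prod_symbolFun_sub_prod_symbolFun_truncate_le hL K hx t).trans_eq ?_
  rw [sub_zero, abs_of_pos Real.two_pi_pos, mul_comm]

/-! ### Entries of products of banded KMS matrices -/

lemma kms_arg_mem_Icc (n : ℕ) (i j : Fin (n+1)) :
    ((i : ℝ) + (j : ℝ)) / (2 * (n : ℝ) + 2) ∈ Icc (0:ℝ) 1 := by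
  have hi : (i : ℝ) ≤ n := by exact_mod_cast Fin.is_le i
  have hj : (j : ℝ) ≤ n := by exact_mod_cast Fin.is_le j
  refine ⟨by positivity, (div_le_one (by positivity)).2 (by linarith)⟩

/-- The entry `(j, j + δ)` of `T_n(c)` with `j = i + s` is `c δ (kmsSample n i s δ)`; outside
`0 ≤ j, j + δ ≤ n` the point is clamped to `[0,1]`. -/
noncomputable def kmsSample (n i : ℕ) (s δ : ℤ) : ℝ :=
  projIcc (0:ℝ) 1 zero_le_one (((2 * i + 2 * s + δ : ℤ) : ℝ) / (2 * n + 2))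

lemma kmsSample_mem_Icc (n i : ℕ) (s δ : ℤ) : kmsSample n i s δ ∈ Icc (0:ℝ) 1 :=
  Subtype.prop _

lemma kmsSample_eq (n : ℕ) (i j k : Fin (n+1)) :
    kmsSample n i ((j : ℤ) - i) ((k : ℤ) - j) = ((j : ℝ) + k) / (2 * n + 2) := by
  have h : (((2 * (i : ℕ) + 2 * ((j : ℤ) - i) + ((k : ℤ) - j) : ℤ) : ℝ)) = (j : ℝ) + k := by
    push_cast; ring
  rw [kmsSample, h, projIcc_of_mem _ (kms_arg_mem_Icc n j k)]

lemma prod_kms_truncate_apply (n K : ℕ) (L : List (ℤ → ℝ → ℂ)) (i j : Fin (n+1))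
    (hlo : K * L.length ≤ (j : ℕ)) (hhi : (j : ℕ) + K * L.length ≤ n) :
    (L.map fun c => kms (truncate K c) n).prod j i =
      bandPathSum K L (kmsSample n i) ((j : ℤ) - i) := by
  induction L generalizing j with
  | nil =>
    simp only [List.map_nil, List.prod_nil, Matrix.one_apply, bandPathSum, sub_eq_zero,
      Nat.cast_inj, Fin.val_inj]
  | cons c L ih =>
    simp only [List.length_cons, mul_add, mul_one] at hlo hhi
    rw [List.map_cons, List.prod_cons, Matrix.mul_apply, bandPathSum,
      ← sum_fin_ite_abs_sub_le j (by omega) (by omega)]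
    refine Finset.sum_congr rfl fun k _ => ?_
    by_cases hk : |(k : ℤ) - j| ≤ K
    · rw [abs_le] at hk
      rw [if_pos (abs_le.2 hk), kms, truncate, if_pos (abs_le.2 hk), ih k (by omega) (by omega),
        kmsSample_eq, sub_add_sub_cancel']
    · rw [if_neg hk, kms, truncate, if_neg hk, zero_mul]

/-! ### Riemann sums -/

lemma tendsto_kmsSample (hx : x ∈ Icc (0:ℝ) 1) (s δ : ℤ) :
    Tendsto (fun n : ℕ => kmsSample n ⌊(n + 1 : ℝ) * x⌋₊ s δ) atTop (𝓝[Icc (0:ℝ) 1] x) := by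
  have hN : Tendsto (fun n : ℕ => (n + 1 : ℝ)) atTop atTop :=
    tendsto_atTop_add_const_right _ _ tendsto_natCast_atTop_atTop
  have hfloor : Tendsto (fun n : ℕ => (⌊(n + 1 : ℝ) * x⌋₊ : ℝ) / (n + 1)) atTop (𝓝 x) := by
    refine ((tendsto_nat_floor_mul_div_atTop hx.1).comp hN).congr fun n => ?_
    simp [mul_comm x]
  have harg : Tendsto (fun n : ℕ =>
      (((2 * ⌊(n + 1 : ℝ) * x⌋₊ + 2 * s + δ : ℤ) : ℝ)) / (2 * n + 2)) atTop (𝓝 x) := by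
    have hshift : Tendsto (fun n : ℕ => ((2 * s + δ : ℤ) : ℝ) / (2 * (n + 1 : ℝ))) atTop (𝓝 0) :=
      tendsto_const_nhds.div_atTop (hN.const_mul_atTop two_pos)
    refine (by simpa using hfloor.add hshift : Tendsto _ atTop (𝓝 x)).congr fun n => ?_
    push_cast
    field_simp
    ring
  have hproj := ((continuous_subtype_val.comp
    (continuous_projIcc (a := (0:ℝ)) (b := 1) (h := zero_le_one))).tendsto x).comp harg
  simp only [Function.comp_apply, projIcc_of_mem _ hx] at hproj
  exact tendsto_nhdsWithin_iff.2 ⟨hproj, Eventually.of_forall fun n => kmsSample_mem_Icc _ _ _ _⟩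

lemma ae_forall_continuousWithinAt
    (hcont : ∀ c ∈ L, AEContinuousCoeffs c) :
    ∀ᵐ x ∂(volume.restrict (Ioc (0:ℝ) 1)),
      ∀ c ∈ L, ∀ k, ContinuousWithinAt (c k) (Icc (0:ℝ) 1) x :=
  ae_restrict_of_ae_restrict_of_subset Ioc_subset_Icc_self <|
    (eventually_all_finite L.finite_toSet).2 fun c hc => ae_all_iff.2 (hcont c hc)

lemma measurable_bandPathSum_kmsSample (K : ℕ) (L : List (ℤ → ℝ → ℂ)) (n : ℕ) :
    Measurable fun x : ℝ => bandPathSum K L (kmsSample n ⌊(n + 1 : ℝ) * x⌋₊) 0 :=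
  (measurable_from_top (f := fun i : ℕ => bandPathSum K L (kmsSample n i) 0)).comp
    (Nat.measurable_floor.comp (measurable_const.mul measurable_id))

lemma tendsto_bandPathSum_kmsSample (K : ℕ)
    (hcont : ∀ c ∈ L, AEContinuousCoeffs c) :
    ∀ᵐ x ∂(volume.restrict (Ioc (0:ℝ) 1)),
      Tendsto (fun n : ℕ => bandPathSum K L (kmsSample n ⌊(n + 1 : ℝ) * x⌋₊) 0) atTop
        (𝓝 (bandPathSum K L (fun _ _ => x) 0)) := by
  filter_upwards [ae_forall_continuousWithinAt hcont, ae_restrict_mem measurableSet_Ioc]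
    with x hxc hx
  exact tendsto_bandPathSum K (tendsto_kmsSample (Ioc_subset_Icc_self hx)) hxc 0

lemma tendsto_integral_bandPathSum_kmsSample (hL : ∀ c ∈ L, WienerBounded c) (K : ℕ)
    (hcont : ∀ c ∈ L, AEContinuousCoeffs c) :
    Tendsto (fun n : ℕ => ∫ x in (0:ℝ)..1, bandPathSum K L (kmsSample n ⌊(n + 1 : ℝ) * x⌋₊) 0)
      atTop (𝓝 (∫ x in (0:ℝ)..1, bandPathSum K L (fun _ _ => x) 0)) := by
  refine intervalIntegral.tendsto_integral_filter_of_dominated_convergence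
    (fun _ => (L.map wienerNorm).prod)
    (Eventually.of_forall fun n => (measurable_bandPathSum_kmsSample K L n).aestronglyMeasurable)
    (Eventually.of_forall fun n => Eventually.of_forall fun x _ =>
      norm_bandPathSum_le hL K (kmsSample_mem_Icc n _) 0)
    intervalIntegrable_const ?_
  rw [uIoc_of_le zero_le_one, ← ae_restrict_iff' measurableSet_Ioc]
  exact tendsto_bandPathSum_kmsSample K hcont

lemma intervalIntegrable_bandPathSum (hL : ∀ c ∈ L, WienerBounded c) (K : ℕ)
    (hcont : ∀ c ∈ L, AEContinuousCoeffs c) :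
    IntervalIntegrable (fun x => bandPathSum K L (fun _ _ => x) 0) volume 0 1 := by
  rw [intervalIntegrable_iff_integrableOn_Ioc_of_le zero_le_one]
  refine Integrable.of_bound (aestronglyMeasurable_of_tendsto_ae atTop
    (fun n => (measurable_bandPathSum_kmsSample K L n).aestronglyMeasurable)
    (tendsto_bandPathSum_kmsSample K hcont)) (L.map wienerNorm).prod ?_
  filter_upwards [ae_restrict_mem measurableSet_Ioc] with x hx
  exact norm_bandPathSum_le hL K (fun _ _ => Ioc_subset_Icc_self hx) 0

lemma intervalIntegrable_integral_prod_symbolFun (hL : ∀ c ∈ L, WienerBounded c)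
    (hcont : ∀ c ∈ L, AEContinuousCoeffs c) :
    IntervalIntegrable (fun x => ∫ t in (0:ℝ)..(2 * Real.pi), (L.map (symbolFun · x t)).prod)
      volume 0 1 := by
  rw [intervalIntegrable_iff_integrableOn_Ioc_of_le zero_le_one]
  have hK : ∀ K, AEStronglyMeasurable (fun x => 2 * Real.pi * bandPathSum K L (fun _ _ => x) 0)
      (volume.restrict (Ioc (0:ℝ) 1)) := fun K =>
    (((intervalIntegrable_iff_integrableOn_Ioc_of_le zero_le_one).1
      (intervalIntegrable_bandPathSum hL K hcont)).const_mul _).aestronglyMeasurable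
  refine Integrable.of_bound (aestronglyMeasurable_of_tendsto_ae atTop hK ?_)
    ((L.map wienerNorm).prod * (2 * Real.pi)) ?_
  all_goals filter_upwards [ae_restrict_mem measurableSet_Ioc] with x hx
  · rw [tendsto_iff_norm_sub_tendsto_zero]
    refine squeeze_zero_norm (fun K => ?_)
      (by simpa using (tendsto_truncationError hL).const_mul (2 * Real.pi))
    rw [norm_norm, norm_sub_rev]
    exact norm_integral_prod_symbolFun_sub_bandPathSum_le hL K (Ioc_subset_Icc_self hx)
  · refine (intervalIntegral.norm_integral_le_of_norm_le_const fun t _ =>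
      norm_list_prod_le_of_le L fun c hc =>
        norm_symbolFun_le (hL c hc) (Ioc_subset_Icc_self hx) t).trans_eq ?_
    rw [sub_zero, abs_of_pos Real.two_pi_pos]

lemma dist_integral_bandPathSum_le (hL : ∀ c ∈ L, WienerBounded c)
    (hcont : ∀ c ∈ L, AEContinuousCoeffs c) (K : ℕ) :
    dist (∫ x in (0:ℝ)..1, bandPathSum K L (fun _ _ => x) 0)
      ((∫ x in (0:ℝ)..1, ∫ t in (0:ℝ)..(2 * Real.pi), (L.map (symbolFun · x t)).prod) /
        (2 * Real.pi)) ≤ truncationError K L := by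
  have hpi : (2 * Real.pi : ℂ) ≠ 0 := by exact_mod_cast Real.two_pi_pos.ne'
  have hB : ∫ x in (0:ℝ)..1, bandPathSum K L (fun _ _ => x) 0 =
      (∫ x in (0:ℝ)..1, 2 * Real.pi * bandPathSum K L (fun _ _ => x) 0) / (2 * Real.pi) := by
    rw [intervalIntegral.integral_const_mul]; field_simp
  rw [dist_comm, dist_eq_norm, hB, ← sub_div,
    ← intervalIntegral.integral_sub (intervalIntegrable_integral_prod_symbolFun hL hcont)
      ((intervalIntegrable_bandPathSum hL K hcont).const_mul _),
    norm_div, div_le_iff₀ (by simp)]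
  refine (intervalIntegral.norm_integral_le_of_norm_le_const fun x hx =>
    norm_integral_prod_symbolFun_sub_bandPathSum_le hL K ?_).trans_eq ?_
  · rw [uIoc_of_le zero_le_one] at hx; exact Ioc_subset_Icc_self hx
  · simp [abs_of_pos Real.pi_pos]; ring

/-! ### Traces -/

section LinftyOpNorm

attribute [local instance] Matrix.linftyOpNormedRing

lemma norm_kms_le (hc : WienerBounded c) (n : ℕ) : ‖kms c n‖ ≤ wienerNorm c :=
  linfty_opNorm_le_of_forall_sum_le _ (wienerNorm_nonneg c) fun i =>
    (Finset.sum_le_sum fun j _ => norm_le_supNorm (hc.bddAbove _) (kms_arg_mem_Icc n i j)).trans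
      (sum_fin_sub_le_tsum hc.summable (fun _ => supNorm_nonneg _) i)

lemma norm_prod_kms_truncate_le (hL : ∀ c ∈ L, WienerBounded c) (n K : ℕ) :
    ‖(L.map fun c => kms (truncate K c) n).prod‖ ≤ (L.map wienerNorm).prod :=
  norm_list_prod_le_of_le L fun c hc =>
    (norm_kms_le ((hL c hc).truncate K) n).trans (wienerNorm_truncate_le (hL c hc) K)

lemma norm_prod_kms_sub_prod_kms_truncate_le (hL : ∀ c ∈ L, WienerBounded c) (n K : ℕ) :
    ‖(L.map (kms · n)).prod - (L.map fun c => kms (truncate K c) n).prod‖ ≤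
      truncationError K L := by
  refine norm_list_prod_sub_le L (fun c hc => norm_kms_le (hL c hc) n)
    (fun c hc => norm_kms_le ((hL c hc).truncate K) n) fun c hc => ?_
  rw [← wienerNorm_truncate_add (hL c hc) K, add_sub_cancel_left]
  exact norm_kms_le (wienerBounded_sub_truncate (hL c hc) K) n

lemma norm_trace_prod_kms_truncate_sub_sum_le (hL : ∀ c ∈ L, WienerBounded c) (n K : ℕ) :
    ‖(L.map fun c => kms (truncate K c) n).prod.trace -
        ∑ i : Fin (n+1), bandPathSum K L (kmsSample n i) 0‖ ≤
      2 * (K * L.length : ℕ) * (2 * (L.map wienerNorm).prod) := by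
  simp only [Matrix.trace, Matrix.diag_apply]
  rw [← Finset.sum_sub_distrib]
  refine norm_sum_le_of_eq_zero_off_ends (fun i => ?_) fun i hlo hhi => ?_
  · refine (norm_sub_le _ _).trans ?_
    linarith [(norm_apply_le_linfty_opNorm _ i i).trans (norm_prod_kms_truncate_le hL n K),
      norm_bandPathSum_le hL K (kmsSample_mem_Icc n i) 0]
  · rw [prod_kms_truncate_apply n K L i i hlo hhi, sub_self, sub_self]

lemma tendsto_trace_prod_kms_truncate_div (hL : ∀ c ∈ L, WienerBounded c) (K : ℕ)
    (hcont : ∀ c ∈ L, AEContinuousCoeffs c) :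
    Tendsto (fun n : ℕ => (L.map fun c => kms (truncate K c) n).prod.trace / (n + 1)) atTop
      (𝓝 (∫ x in (0:ℝ)..1, bandPathSum K L (fun _ _ => x) 0)) := by
  set C : ℝ := 2 * (K * L.length : ℕ) * (2 * (L.map wienerNorm).prod)
  have hboundary : Tendsto (fun n : ℕ => ((L.map fun c => kms (truncate K c) n).prod.trace -
      ∑ i : Fin (n+1), bandPathSum K L (kmsSample n i) 0) / (n + 1)) atTop (𝓝 0) := by
    refine squeeze_zero_norm (a := fun n : ℕ => C / (n + 1)) (fun n => ?_)
      (tendsto_const_div_atTop_nhds_zero_nat C |>.comp (tendsto_add_atTop_nat 1) |>.congr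
        fun n => by simp)
    rw [norm_div, show ‖(n + 1 : ℂ)‖ = n + 1 by exact_mod_cast Complex.norm_natCast (n + 1)]
    exact div_le_div_of_nonneg_right (norm_trace_prod_kms_truncate_sub_sum_le hL n K)
      (by positivity)
  refine (by simpa using hboundary.add (tendsto_integral_bandPathSum_kmsSample hL K hcont) :
    Tendsto _ atTop _).congr fun n => ?_
  rw [integral_comp_natFloor_mul (fun i => bandPathSum K L (kmsSample n i) 0),
    ← Fin.sum_univ_eq_sum_range (fun i => bandPathSum K L (kmsSample n i) 0)]
  field_simp
  ring

lemma dist_trace_prod_kms_div_le (hL : ∀ c ∈ L, WienerBounded c) (K n : ℕ) :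
    dist ((L.map (kms · n)).prod.trace / (n + 1))
      ((L.map fun c => kms (truncate K c) n).prod.trace / (n + 1)) ≤ truncationError K L := by
  rw [dist_eq_norm, ← sub_div, ← Matrix.trace_sub, norm_div,
    show ‖(n + 1 : ℂ)‖ = n + 1 by exact_mod_cast Complex.norm_natCast (n + 1),
    div_le_iff₀ (by positivity), mul_comm]
  refine (norm_trace_le _).trans ?_
  rw [Fintype.card_fin, Nat.cast_add_one]
  exact mul_le_mul_of_nonneg_left (norm_prod_kms_sub_prod_kms_truncate_le hL n K) (by positivity)

end LinftyOpNorm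

theorem tendsto_trace_prod_kms_div (hL : ∀ c ∈ L, WienerBounded c)
    (hcont : ∀ c ∈ L, AEContinuousCoeffs c) :
    Tendsto (fun n : ℕ => (L.map (kms · n)).prod.trace / (n + 1)) atTop
      (𝓝 ((∫ x in (0:ℝ)..1, ∫ t in (0:ℝ)..(2 * Real.pi), (L.map (symbolFun · x t)).prod) /
        (2 * Real.pi))) :=
  tendsto_of_uniform_approx (fun K => tendsto_trace_prod_kms_truncate_div hL K hcont)
    (dist_trace_prod_kms_div_le hL) (dist_integral_bandPathSum_le hL hcont)
    (tendsto_truncationError hL)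

def conjCoeffs (c : ℤ → ℝ → ℂ) : ℤ → ℝ → ℂ := fun k x => starRingEnd ℂ (c (-k) x)

lemma kms_conjCoeffs (c : ℤ → ℝ → ℂ) (n : ℕ) : kms (conjCoeffs c) n = (kms c n)ᴴ := by
  ext i j
  simp only [kms, conjCoeffs, conjTranspose_apply, RCLike.star_def, neg_sub, add_comm (j : ℝ)]

lemma symbolFun_conjCoeffs (c : ℤ → ℝ → ℂ) (x t : ℝ) :
    symbolFun (conjCoeffs c) x t = starRingEnd ℂ (symbolFun c x t) := by
  rw [symbolFun, symbolFun, ← (Equiv.neg ℤ).tsum_eq, starRingEnd_apply, tsum_star]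
  refine tsum_congr fun k => ?_
  simp only [Equiv.neg_apply, conjCoeffs, neg_neg, star_mul', RCLike.star_def, ← Complex.exp_conj,
    map_mul, Complex.conj_I, Complex.conj_ofReal, map_intCast, Int.cast_neg]
  ring_nf

lemma wienerBounded_conjCoeffs (hc : WienerBounded c) : WienerBounded (conjCoeffs c) := by
  have hnorm : ∀ k x, ‖conjCoeffs c k x‖ = ‖c (-k) x‖ := fun k x => Complex.norm_conj _
  refine ⟨fun k => by simpa only [hnorm] using hc.bddAbove (-k), ?_⟩
  exact (hc.summable.comp_injective neg_injective).congr fun k => by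
    simp only [Function.comp_apply, supNorm, hnorm]

lemma aeContinuousCoeffs_conjCoeffs (hc : AEContinuousCoeffs c) :
    AEContinuousCoeffs (conjCoeffs c) := fun k =>
  (hc (-k)).mono fun _ hx => Complex.continuous_conj.continuousAt.comp_continuousWithinAt hx

end KMS

open KMS

theorem stmt5_general (a : ℤ → ℝ → ℂ)
    (hR : ∀ k, RiemannIntegrableOn01 (a k))
    (hbdd : ∀ k, BddAbove (Set.range fun x : Set.Icc (0:ℝ) 1 => ‖a k x‖))
    (hsum : Summable fun k : ℤ => supNorm (a k))
    (p q : ℕ) :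
    Tendsto (fun n : ℕ =>
        (Matrix.trace ((kms a n) ^ p * ((kms a n)ᴴ) ^ q)
          - (((n : ℂ) + 1) / (2 * Real.pi)) *
            ∫ x in (0:ℝ)..1, ∫ t in (0:ℝ)..(2 * Real.pi),
              (symbolFun a x t) ^ p * (starRingEnd ℂ (symbolFun a x t)) ^ q) / (n : ℂ))
      atTop (nhds 0) := by
  have ha : WienerBounded a := ⟨hbdd, hsum⟩
  have hcont : AEContinuousCoeffs a := fun k => (hR k).2
  have h := (tendsto_sub_nhds_zero_iff.2 <| tendsto_trace_prod_kms_div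
    (forall_mem_replicate_append ha (wienerBounded_conjCoeffs ha) p q)
    (forall_mem_replicate_append hcont (aeContinuousCoeffs_conjCoeffs hcont) p q)).div
    (tendsto_natCast_div_add_atTop (1 : ℂ)) one_ne_zero
  rw [zero_div] at h
  set L := List.replicate p a ++ List.replicate q (conjCoeffs a)
  -- the quotient by `n` is `(Tr/(n+1) - J/2π) / (n/(n+1))`
  refine h.congr' ?_
  filter_upwards [eventually_ne_atTop 0] with n hn
  have hprod : (kms a n) ^ p * ((kms a n)ᴴ) ^ q = (L.map (kms · n)).prod := by
    simp [L, kms_conjCoeffs]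
  have hsymbol : ∀ x t, (symbolFun a x t) ^ p * (starRingEnd ℂ (symbolFun a x t)) ^ q =
      (L.map (symbolFun · x t)).prod := by
    simp [L, symbolFun_conjCoeffs]
  have hpi : (2 * Real.pi : ℂ) ≠ 0 := by exact_mod_cast Real.two_pi_pos.ne'
  have hn0 : (n : ℂ) ≠ 0 := Nat.cast_ne_zero.2 hn
  have hn1 : (n + 1 : ℂ) ≠ 0 := by exact_mod_cast Nat.succ_ne_zero n
  simp only [Pi.div_apply, hprod, hsymbol]
  field_simp

/-- Mixed-moment trace asymptotics for normal KMS matrices: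
`Tr[T_n^p (T_n^*)^q] = ((n+1)/(2π)) ∬ a^p conj(a)^q dt dx + o(n)`. -/
theorem stmt5 (a : ℤ → ℝ → ℂ)
    (hR : ∀ k, RiemannIntegrableOn01 (a k))
    (hbdd : ∀ k, BddAbove (Set.range fun x : Set.Icc (0:ℝ) 1 => ‖a k x‖))
    (hsum : Summable fun k : ℤ => supNorm (a k))
    (hnormal : ∀ n, IsStarNormal (kms a n)) (p q : ℕ) :
    Tendsto (fun n : ℕ =>
        (Matrix.trace ((kms a n) ^ p * ((kms a n)ᴴ) ^ q)
          - (((n : ℂ) + 1) / (2 * Real.pi)) *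
            ∫ x in (0:ℝ)..1, ∫ t in (0:ℝ)..(2 * Real.pi),
              (symbolFun a x t) ^ p * (starRingEnd ℂ (symbolFun a x t)) ^ q) / (n : ℂ))
      atTop (nhds 0) :=
  stmt5_general a hR hbdd hsum p q
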